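/- arXiv:1911.10551 — 4 statements merged into one kernel-verified Lean document; each statement's English description precedes it below -/
import Mathlib

section
/- Let S ⊆ X be a closed set and x̄ ∈ S. Then the regular (Fréchet) normal cone to S at x̄ equals the negative polar cone of the tangent cone to S at x̄: N̂_S(x̄) = [T_S(x̄)]°. -/
open Filter Topology
open scoped RealInnerProductSpace

/-- The (Bouligand) tangent cone to `S` at `x`, via sequences. -/
def tangentConeB {X : Type*} [NormedAddCommGroup X] [InnerProductSpace ℝ X]
    (S : Set X) (x : X) : Set X :=
  {d | ∃ (t : ℕ → ℝ) (dk : ℕ → X), (∀ k, 0 < t k) ∧ Tendsto t atTop (𝓝 0) ∧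
    Tendsto dk atTop (𝓝 d) ∧ ∀ k, x + t k • dk k ∈ S}

/-- The regular (Fréchet) normal cone to `S` at `x`:
vectors `v` with `⟨v, x' − x⟩ ≤ o(‖x' − x‖)` over `x' ∈ S`. -/
def frechetNormalCone {X : Type*} [NormedAddCommGroup X] [InnerProductSpace ℝ X]
    (S : Set X) (x : X) : Set X :=
  {v | ∀ ε > (0 : ℝ), ∃ δ > (0 : ℝ), ∀ y ∈ S, ‖y - x‖ < δ → ⟪v, y - x⟫ ≤ ε * ‖y - x‖}

/-- The negative polar of a set `C`. -/
def negPolar {X : Type*} [NormedAddCommGroup X] [InnerProductSpace ℝ X]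
    (C : Set X) : Set X :=
  {v | ∀ c ∈ C, ⟪v, c⟫ ≤ 0}

/-- The Fréchet normal cone to a closed set equals the negative polar of the tangent cone. -/
theorem frechetNormalCone_eq_negPolar_tangentCone
    {X : Type*} [NormedAddCommGroup X] [InnerProductSpace ℝ X] [FiniteDimensional ℝ X]
    (S : Set X) (hS : IsClosed S) (x : X) (hx : x ∈ S) :
    frechetNormalCone S x = negPolar (tangentConeB S x) := by
  ext v
  constructor
  · -- forward: v in Fréchet normal cone implies v in polar of tangent cone
    rintro hv d ⟨t, dk, ht, ht0, hdk, hmem⟩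
    have key : ∀ ε > (0 : ℝ), ⟪v, d⟫ ≤ ε * ‖d‖ := by
      intro ε hε
      obtain ⟨δ, hδ, hδ'⟩ := hv ε hε
      -- eventually t k • dk k is small
      have hsmul : Tendsto (fun k => t k • dk k) atTop (𝓝 (0 : X)) := by
        have := ht0.smul hdk
        simpa using this
      have hev : ∀ᶠ k in atTop, ‖t k • dk k‖ < δ := by
        have := hsmul.norm
        simp only [norm_zero] at this
        exact this.eventually (eventually_lt_nhds hδ)
      have hineq : ∀ᶠ k in atTop, ⟪v, dk k⟫ ≤ ε * ‖dk k‖ := by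
        filter_upwards [hev] with k hk
        have h1 := hδ' (x + t k • dk k) (hmem k) (by simpa using hk)
        have h2 : ⟪v, t k • dk k⟫ ≤ ε * ‖t k • dk k‖ := by simpa using h1
        rw [real_inner_smul_right, norm_smul, Real.norm_eq_abs,
          abs_of_pos (ht k), mul_left_comm] at h2
        exact le_of_mul_le_mul_left h2 (ht k)
      have hl : Tendsto (fun k => ⟪v, dk k⟫) atTop (𝓝 ⟪v, d⟫) :=
        (continuous_const.inner continuous_id).continuousAt.tendsto.comp hdk
      have hr : Tendsto (fun k => ε * ‖dk k‖) atTop (𝓝 (ε * ‖d‖)) :=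
        (tendsto_const_nhds.mul hdk.norm)
      exact le_of_tendsto_of_tendsto hl hr hineq
    by_contra h
    push_neg at h
    have hd0 : (0:ℝ) ≤ ‖d‖ := norm_nonneg d
    have := key (⟪v, d⟫ / (2 * (‖d‖ + 1))) (by positivity)
    rw [div_mul_eq_mul_div, le_div_iff₀ (by positivity : (0:ℝ) < 2 * (‖d‖ + 1))] at this
    nlinarith
  · -- reverse: polar of tangent cone ⊆ Fréchet normal cone
    intro hv
    by_contra hnot
    simp only [frechetNormalCone, Set.mem_setOf_eq] at hnot
    push_neg at hnot
    obtain ⟨ε, hε, hδ⟩ := hnot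
    -- choose y k with ‖y k - x‖ < 1/(k+1)
    have hyk : ∀ k : ℕ, ∃ y ∈ S, ‖y - x‖ < 1 / (k + 1) ∧ ε * ‖y - x‖ < ⟪v, y - x⟫ :=
      fun k => hδ (1 / (k + 1)) (by positivity)
    choose y hyS hylt hyin using hyk
    have hyne : ∀ k, y k ≠ x := by
      intro k hk
      have := hyin k
      rw [hk] at this
      simp at this
    set t : ℕ → ℝ := fun k => ‖y k - x‖ with htdef
    have ht : ∀ k, 0 < t k := fun k => norm_pos_iff.mpr (sub_ne_zero.mpr (hyne k))
    set dk : ℕ → X := fun k => (t k)⁻¹ • (y k - x) with hdkdef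
    have hdknorm : ∀ k, ‖dk k‖ = 1 := by
      intro k
      rw [hdkdef]
      simp only [norm_smul, Real.norm_eq_abs, abs_of_pos (inv_pos.mpr (ht k))]
      exact div_self (ht k).ne' ▸ (inv_mul_eq_div (t k) (t k)) ▸ rfl
    have hsph : ∀ k, dk k ∈ Metric.sphere (0 : X) 1 := by
      intro k; simpa [Metric.mem_sphere, dist_eq_norm] using hdknorm k
    obtain ⟨d, hd, φ, hφ, hφt⟩ := (isCompact_sphere (0 : X) 1).tendsto_subseq hsph
    have ht0 : Tendsto t atTop (𝓝 0) := by
      apply squeeze_zero (fun k => (ht k).le) (fun k => (hylt k).le)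
      exact tendsto_one_div_add_atTop_nhds_zero_nat
    have hdtang : d ∈ tangentConeB S x := by
      refine ⟨t ∘ φ, dk ∘ φ, fun k => ht _, ht0.comp hφ.tendsto_atTop, hφt, ?_⟩
      intro k
      have : (t (φ k)) • dk (φ k) = y (φ k) - x := by
        rw [hdkdef]
        exact smul_inv_smul₀ (ht (φ k)).ne' _
      simp only [Function.comp_apply, this]
      simpa using hyS (φ k)
    have hle := hv d hdtang
    -- but ⟪v, d⟫ ≥ ε
    have hge : ε ≤ ⟪v, d⟫ := by
      have hk : ∀ k, ε ≤ ⟪v, dk (φ k)⟫ := by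
        intro k
        have h1 := hyin (φ k)
        have h2 : ⟪v, dk (φ k)⟫ = (t (φ k))⁻¹ * ⟪v, y (φ k) - x⟫ := by
          rw [hdkdef, real_inner_smul_right]
        have hne := (ht (φ k)).ne'
        rw [h2, show ε = (t (φ k))⁻¹ * (ε * t (φ k)) by field_simp]
        exact mul_le_mul_of_nonneg_left h1.le (inv_pos.mpr (ht (φ k))).le
      have hl : Tendsto (fun k => ⟪v, dk (φ k)⟫) atTop (𝓝 ⟪v, d⟫) :=
        (continuous_const.inner continuous_id).continuousAt.tendsto.comp hφt
      exact le_of_tendsto_of_tendsto' tendsto_const_nhds hl hk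
    linarith
end

section
/- Let C ⊆ X be a closed cone in a finite-dimensional inner product space and c ∈ C. Then the outer second-order tangent set to C at the origin in direction c equals the tangent cone to C at c: T²_C(0; c) = T_C(c). -/
open Filter Topology

/-- The outer second-order tangent set to `S` at `x` in direction `h`:
`w` such that `dist (x + t_k h + ½ t_k² w, S) = o(t_k²)` for some `t_k ↓ 0`. -/
def outerSecondOrderTangentSet {X : Type*} [NormedAddCommGroup X] [InnerProductSpace ℝ X]
    (S : Set X) (x h : X) : Set X :=
  {w | ∃ t : ℕ → ℝ, (∀ k, 0 < t k) ∧ Tendsto t atTop (𝓝 0) ∧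
    Tendsto (fun k => Metric.infDist (x + t k • h + ((t k) ^ 2 / 2) • w) S / (t k) ^ 2)
      atTop (𝓝 0)}

/-! A cone is invariant under positive dilations, so the distance to it is positively
homogeneous: `dist (t c + ½ t² w, C) / t² = dist (c + (t/2) w, C) / t`. Hence both sets consist
of the directions `w` with `dist (c + s_k w, C) = o(s_k)` along some `s_k ↓ 0`; for the tangent
cone this is seen by choosing near-minimizers `y_k ∈ C` and setting `d_k = (y_k - c) / s_k`. -/

open Metric Pointwise

theorem smul_set_eq_of_pos_smul_mem {E : Type*} [MulAction ℝ E] {C : Set E}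
    (hC : ∀ a : ℝ, 0 < a → ∀ x ∈ C, a • x ∈ C) {a : ℝ}
    (ha : 0 < a) : a • C = C :=
  (Set.smul_set_subset_iff.2 fun x hx => hC a ha x hx).antisymm fun x hx =>
    ⟨a⁻¹ • x, hC _ (inv_pos.2 ha) x hx, smul_inv_smul₀ ha.ne' x⟩

theorem infDist_smul_of_pos_smul_mem {E : Type*} [NormedAddCommGroup E] [NormedSpace ℝ E]
    {C : Set E} (hC : ∀ a : ℝ, 0 < a → ∀ x ∈ C, a • x ∈ C) {a : ℝ}
    (ha : 0 < a) (x : E) : infDist (a • x) C = a * infDist x C := by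
  conv_lhs => rw [← smul_set_eq_of_pos_smul_mem hC ha]
  rw [infDist_smul₀ ha.ne', Real.norm_of_nonneg ha.le]

theorem dist_add_smul_add_smul {E : Type*} [NormedAddCommGroup E] [NormedSpace ℝ E]
    (x v w : E) {s : ℝ} (hs : 0 ≤ s) : dist (x + s • v) (x + s • w) = s * dist v w := by
  rw [dist_add_left, dist_smul₀, Real.norm_of_nonneg hs]

section TangentSets

variable {X : Type*} [NormedAddCommGroup X] [InnerProductSpace ℝ X]

theorem mem_tangentConeB_iff_infDist {S : Set X} {x : X} (hS : S.Nonempty) (w : X) :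
    w ∈ tangentConeB S x ↔ ∃ s : ℕ → ℝ, (∀ k, 0 < s k) ∧ Tendsto s atTop (𝓝 0) ∧
      Tendsto (fun k => infDist (x + s k • w) S / s k) atTop (𝓝 0) := by
  constructor
  · rintro ⟨s, d, hs_pos, hs, hd, hd_mem⟩
    refine ⟨s, hs_pos, hs, squeeze_zero (fun k => div_nonneg infDist_nonneg (hs_pos k).le)
      (fun k => ?_) (tendsto_iff_dist_tendsto_zero.1 hd)⟩
    rw [div_le_iff₀ (hs_pos k), dist_comm, mul_comm, ← dist_add_smul_add_smul x _ _ (hs_pos k).le]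
    exact infDist_le_dist_of_mem (hd_mem k)
  · rintro ⟨s, hs_pos, hs, hq⟩
    have hy : ∀ k, ∃ y ∈ S, dist (x + s k • w) y < infDist (x + s k • w) S + s k ^ 2 := fun k =>
      (infDist_lt_iff hS).1 (lt_add_of_pos_right _ (pow_pos (hs_pos k) 2))
    choose y hyS hy using hy
    refine ⟨s, fun k => (s k)⁻¹ • (y k - x), hs_pos, hs, ?_, fun k => by
      simpa [smul_inv_smul₀ (hs_pos k).ne'] using hyS k⟩
    refine tendsto_iff_dist_tendsto_zero.2 (squeeze_zero (fun k => dist_nonneg) (fun k => ?_)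
      (by simpa using hq.add hs))
    have hxy : dist (x + s k • w) (y k) = s k * dist ((s k)⁻¹ • (y k - x)) w := by
      rw [dist_comm _ w, ← dist_add_smul_add_smul x _ _ (hs_pos k).le,
        smul_inv_smul₀ (hs_pos k).ne', add_sub_cancel]
    rw [div_add' _ _ _ (hs_pos k).ne', le_div_iff₀ (hs_pos k)]
    linarith [hy k]

theorem infDist_zero_add_smul_add_sq_smul_div_sq {C : Set X}
    (hC : ∀ a : ℝ, 0 < a → ∀ x ∈ C, a • x ∈ C)
    {t : ℝ} (ht : 0 < t) (c w : X) :
    infDist ((0 : X) + t • c + (t ^ 2 / 2) • w) C / t ^ 2 =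
      infDist (c + (t / 2) • w) C / (t / 2) / 2 := by
  have h : (0 : X) + t • c + (t ^ 2 / 2) • w = t • (c + (t / 2) • w) := by
    match_scalars <;> ring
  rw [h, infDist_smul_of_pos_smul_mem hC ht]
  field_simp

theorem mem_outerSecondOrderTangentSet_zero_iff_infDist {C : Set X}
    (hC : ∀ a : ℝ, 0 < a → ∀ x ∈ C, a • x ∈ C) (c w : X) :
    w ∈ outerSecondOrderTangentSet C 0 c ↔ ∃ s : ℕ → ℝ, (∀ k, 0 < s k) ∧
      Tendsto s atTop (𝓝 0) ∧ Tendsto (fun k => infDist (c + s k • w) C / s k) atTop (𝓝 0) := by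
  constructor
  · rintro ⟨t, ht_pos, ht, hq⟩
    refine ⟨fun k => t k / 2, fun k => half_pos (ht_pos k), by simpa using ht.div_const 2, ?_⟩
    convert hq.const_mul 2 using 2 with k
    · rw [infDist_zero_add_smul_add_sq_smul_div_sq hC (ht_pos k)]
      ring
    · simp
  · rintro ⟨s, hs_pos, hs, hq⟩
    refine ⟨fun k => 2 * s k, fun k => mul_pos two_pos (hs_pos k), by simpa using hs.const_mul 2,
      ?_⟩
    convert hq.div_const 2 using 2 with k
    · rw [infDist_zero_add_smul_add_sq_smul_div_sq hC (mul_pos two_pos (hs_pos k)),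
        mul_div_cancel_left₀ _ two_ne_zero]
    · simp

end TangentSets

theorem outerSecondOrderTangentSet_cone_zero_general
    {X : Type*} [NormedAddCommGroup X] [InnerProductSpace ℝ X]
    (C : Set X) (hcone : ∀ (lam : ℝ), 0 ≤ lam → ∀ c ∈ C, lam • c ∈ C)
    (c : X) (hc : c ∈ C) :
    outerSecondOrderTangentSet C 0 c = tangentConeB C c := by
  ext w
  rw [mem_outerSecondOrderTangentSet_zero_iff_infDist (fun a ha => hcone a ha.le),
    mem_tangentConeB_iff_infDist ⟨c, hc⟩]

/-- For a closed cone `C` and `c ∈ C`, the outer second-order tangent set to `C` at the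
origin in direction `c` equals the tangent cone to `C` at `c`: `T²_C(0; c) = T_C(c)`. -/
theorem outerSecondOrderTangentSet_cone_zero
    {X : Type*} [NormedAddCommGroup X] [InnerProductSpace ℝ X] [FiniteDimensional ℝ X]
    (C : Set X) (hC : IsClosed C) (hcone : ∀ (lam : ℝ), 0 ≤ lam → ∀ c ∈ C, lam • c ∈ C)
    (c : X) (hc : c ∈ C) :
    outerSecondOrderTangentSet C 0 c = tangentConeB C c :=
  outerSecondOrderTangentSet_cone_zero_general C hcone c hc
end

section
/- Consider the rank-regularized problem min_{X ∈ S^n} θ(X) + rank(X) with θ: S^n → ℝ₊, and its lift min_{X, W} θ(X) + tr(W) subject to ⟨X, W − I⟩ = 0, X ⪰ 0, W − I ⪯ 0, W ⪰ 0. For any X ⪰ 0 with eigendecomposition X = P Diag(λ(X)) Pᵀ and r = rank(X), setting W = P₁P₁ᵀ where P₁ consists of the eigenvector columns for the nonzero eigenvalues, the pair (X, W) is feasible for the lifted problem and the objective values agree: θ(X) + tr(W) = θ(X) + rank(X). -/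
open scoped Classical
open Matrix

/-- For `X ⪰ 0` with orthogonal eigendecomposition `X = P Diag(λ) Pᵀ` and
`W = P₁ P₁ᵀ` (the spectral projector onto the range of `X`), the pair `(X, W)` is
feasible for the lifted problem `min θ(X) + tr(W)` s.t. `⟨X, W − I⟩ = 0`, `X ⪰ 0`,
`W − I ⪯ 0`, `W ⪰ 0`, and the objective values agree:
`θ(X) + tr(W) = θ(X) + rank(X)`. -/
theorem rank_lift_feasible {n : ℕ} (θ : Matrix (Fin n) (Fin n) ℝ → ℝ)
    (hθ : ∀ A, 0 ≤ θ A)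
    (X P W : Matrix (Fin n) (Fin n) ℝ) (lam : Fin n → ℝ)
    (hX : X.PosSemidef)
    (hP : P * Pᵀ = 1)
    (hdecomp : X = P * Matrix.diagonal lam * Pᵀ)
    (hW : W = P * Matrix.diagonal (fun i => if lam i = 0 then (0 : ℝ) else 1) * Pᵀ) :
    (X * (W - 1)).trace = 0 ∧
    X.PosSemidef ∧
    (-(W - 1)).PosSemidef ∧
    W.PosSemidef ∧
    θ X + W.trace = θ X + (X.rank : ℝ) := by
  have hPt : Pᵀ * P = 1 := mul_eq_one_comm.mp hP
  set e : Fin n → ℝ := fun i => if lam i = 0 then (0 : ℝ) else 1 with he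
  have hXW : X * W = X := by
    rw [hdecomp, hW]
    calc (P * Matrix.diagonal lam * Pᵀ) * (P * Matrix.diagonal e * Pᵀ)
        = P * (Matrix.diagonal lam * (Pᵀ * P) * Matrix.diagonal e) * Pᵀ := by
          simp only [Matrix.mul_assoc]
      _ = P * Matrix.diagonal lam * Pᵀ := by
          rw [hPt, Matrix.mul_one, Matrix.diagonal_mul_diagonal]
          have : (fun i => lam i * e i) = lam := by
            funext i; by_cases h : lam i = 0 <;> simp [he, h]
          rw [this]
  have hsandwich : ∀ d : Fin n → ℝ, (∀ i, 0 ≤ d i) →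
      (P * Matrix.diagonal d * Pᵀ).PosSemidef := by
    intro d hd
    have h1 : (Matrix.diagonal d).PosSemidef := Matrix.posSemidef_diagonal_iff.mpr hd
    have := h1.mul_mul_conjTranspose_same P
    simpa [Matrix.conjTranspose_eq_transpose_of_trivial] using this
  have hWpsd : W.PosSemidef := by
    rw [hW]
    exact hsandwich e fun i => by by_cases h : lam i = 0 <;> simp [he, h]
  have h1W : -(W - 1) = P * Matrix.diagonal (fun i => 1 - e i) * Pᵀ := by
    have hone : (1 : Matrix (Fin n) (Fin n) ℝ) = P * Matrix.diagonal (fun _ => (1:ℝ)) * Pᵀ := by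
      simp [Matrix.diagonal_one, Matrix.mul_one, hP]
    rw [neg_sub, hW]
    calc (1 : Matrix (Fin n) (Fin n) ℝ) - P * Matrix.diagonal e * Pᵀ
        = P * Matrix.diagonal (fun _ => (1:ℝ)) * Pᵀ - P * Matrix.diagonal e * Pᵀ := by
          rw [← hone]
      _ = P * (Matrix.diagonal (fun _ => (1:ℝ)) - Matrix.diagonal e) * Pᵀ := by
          rw [Matrix.mul_sub, Matrix.sub_mul]
      _ = P * Matrix.diagonal (fun i => 1 - e i) * Pᵀ := by
          rw [Matrix.diagonal_sub]
  have hrank : (X.rank : ℝ) = W.trace := by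
    have hdet : IsUnit P.det := Matrix.isUnit_det_of_right_inverse hP
    have hdetT : IsUnit Pᵀ.det := Matrix.isUnit_det_of_right_inverse hPt
    have hr : X.rank = (Matrix.diagonal lam).rank := by
      rw [hdecomp, Matrix.rank_mul_eq_left_of_isUnit_det Pᵀ _ hdetT,
        Matrix.rank_mul_eq_right_of_isUnit_det P _ hdet]
    have htr : W.trace = (Matrix.diagonal e).trace := by
      rw [hW, Matrix.trace_mul_cycle, hPt, Matrix.one_mul]
    rw [hr, Matrix.rank_diagonal, htr, Matrix.trace_diagonal]
    rw [Fintype.card_subtype]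
    have : ∀ i, e i = if lam i ≠ 0 then (1:ℝ) else 0 := by
      intro i; by_cases h : lam i = 0 <;> simp [he, h]
    simp only [this]
    rw [Finset.sum_boole]
  refine ⟨?_, hX, ?_, hWpsd, ?_⟩
  · rw [Matrix.mul_sub, Matrix.mul_one, hXW, sub_self, Matrix.trace_zero]
  · rw [h1W]
    exact hsandwich _ fun i => by by_cases h : lam i = 0 <;> simp [he, h]
  · rw [hrank]
end

section
/- Let X ∈ bd(S^n_+) \ {0} be a nonzero positive semidefinite singular matrix with eigendecomposition X = P Diag(λ) Pᵀ, let α = {i : λ_i > 0} and β = {i : λ_i = 0}. Then the relative interior of the tangent cone to S^n_+ at X is ri(T_{S^n_+}(X)) = {Γ ∈ S^n | P_βᵀ Γ P_β ≻ 0}, where P_β is the submatrix of eigenvector columns corresponding to zero eigenvalues. -/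
/-!
Write `f H = P_βᵀ H P_β`; it is a continuous linear map from `S^n` to symmetric matrices with
`f I = I` (as `PᵀP = I`). Positive definiteness is an open condition among symmetric matrices, so
`{Γ ∈ S^n | f Γ ≻ 0}` is relatively open in `S^n`; it contains a neighbourhood of `I` in `S^n`,
hence the cone `{H ∈ S^n | f H ⪰ 0}` spans `S^n`. Conversely, if `H` is a relative interior point
of the cone then `H - tI` stays in the cone for some `t > 0`, and `f H = f (H - tI) + tI ≻ 0`.
-/

open Matrix Filter Topology

attribute [local instance] Matrix.normedAddCommGroup Matrix.normedSpace

theorem Matrix.PosDef.eventually_isHermitian_imp_posDef {ι : Type*} [Fintype ι]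
    {A : Matrix ι ι ℝ} (hA : A.PosDef) : ∀ᶠ B in 𝓝 A, B.IsHermitian → B.PosDef := by
  have hsphere : ∀ᶠ B in 𝓝 A, ∀ x ∈ Metric.sphere (0 : ι → ℝ) 1, 0 < x ⬝ᵥ B *ᵥ x := by
    refine (isCompact_sphere 0 1).eventually_forall_of_forall_eventually fun x hx => ?_
    have hcont : Continuous fun p : Matrix ι ι ℝ × (ι → ℝ) => p.2 ⬝ᵥ p.1 *ᵥ p.2 := by
      fun_prop
    refine continuousAt_const.eventually_lt hcont.continuousAt ?_
    simpa using hA.dotProduct_mulVec_pos (ne_zero_of_mem_unit_sphere ⟨x, hx⟩)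
  -- homogeneity reduces `x ≠ 0` to the unit sphere
  filter_upwards [hsphere] with B hB hBh
  refine .of_dotProduct_mulVec_pos hBh fun x hx => ?_
  have hnorm : 0 < ‖x‖ := norm_pos_iff.mpr hx
  have := hB (‖x‖⁻¹ • x) (by simp [norm_smul, hnorm.ne'])
  rw [Matrix.mulVec_smul, dotProduct_smul, smul_dotProduct, smul_eq_mul, smul_eq_mul] at this
  exact pos_of_mul_pos_right (pos_of_mul_pos_right this (by positivity)) (by positivity)

theorem intrinsicInterior_eq_of_affineSpan_eq {𝕜 E : Type*} [Ring 𝕜] [AddCommGroup E] [Module 𝕜 E]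
    [TopologicalSpace E] {s : Set E} {W : AffineSubspace 𝕜 E} (h : affineSpan 𝕜 s = W) :
    intrinsicInterior 𝕜 s = {x | x ∈ W ∧ s ∈ 𝓝[W] x} := by
  subst h
  ext x
  simp only [intrinsicInterior, Set.mem_image, mem_interior_iff_mem_nhds,
    Subtype.exists, exists_and_right, exists_eq_right]
  exact ⟨fun ⟨hx, h⟩ => ⟨hx, preimage_coe_mem_nhds_subtype.mp h⟩,
    fun ⟨hx, h⟩ => ⟨hx, preimage_coe_mem_nhds_subtype.mpr h⟩⟩

section

variable {E : Type*} [AddCommGroup E] [Module ℝ E] [TopologicalSpace E] [IsTopologicalAddGroup E]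
  [ContinuousSMul ℝ E]

theorem Filter.Eventually.exists_pos_add_smul {V : Submodule ℝ E} {x v : E} {p : E → Prop}
    (h : ∀ᶠ y in 𝓝[V] x, p y) (hx : x ∈ V) (hv : v ∈ V) : ∃ t : ℝ, 0 < t ∧ p (x + t • v) := by
  have hline : Tendsto (fun t : ℝ => x + t • v) (𝓝[>] 0) (𝓝[V] x) := by
    refine tendsto_nhdsWithin_iff.mpr ⟨?_, .of_forall fun t => V.add_mem hx (V.smul_mem t hv)⟩
    have : Continuous fun t : ℝ => x + t • v := by fun_prop
    simpa using this.continuousAt.tendsto.mono_left (nhdsWithin_le_nhds (a := (0 : ℝ)))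
  exact ((hline.eventually h).and self_mem_nhdsWithin).exists.imp fun t ht => ⟨ht.2, ht.1⟩

variable {κ : Type*} [Fintype κ]

theorem intrinsicInterior_setOf_posSemidef (V : Submodule ℝ E) (f : E →L[ℝ] Matrix κ κ ℝ)
    (hf : ∀ x ∈ V, (f x).IsHermitian) {e : E} (he : e ∈ V) (hfe : (f e).PosDef) :
    intrinsicInterior ℝ {x | x ∈ V ∧ (f x).PosSemidef} = {x | x ∈ V ∧ (f x).PosDef} := by
  set S := {x | x ∈ V ∧ (f x).PosSemidef}
  have hT : ∀ x ∈ V, (f x).PosDef → ∀ᶠ y in 𝓝[V] x, y ∈ V ∧ (f y).PosDef := fun x _ hx =>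
    (eventually_mem_nhdsWithin.and
      ((f.continuous.tendsto x).eventually hx.eventually_isHermitian_imp_posDef
        |>.filter_mono nhdsWithin_le_nhds)).mono fun y hy => ⟨hy.1, hy.2 (hf y hy.1)⟩
  have hspan : affineSpan ℝ S = V.toAffineSubspace := by
    refine le_antisymm (affineSpan_le.mpr fun x hx => hx.1) fun x hx => ?_
    obtain ⟨t, ht, hts⟩ := (hT e he hfe).exists_pos_add_smul he hx
    have h0 : (0 : E) ∈ S := ⟨V.zero_mem, by simpa using PosSemidef.zero⟩
    have hmem := AffineSubspace.smul_vsub_vadd_mem (affineSpan ℝ S) t⁻¹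
      (subset_affineSpan ℝ S ⟨hts.1, hts.2.posSemidef⟩) (subset_affineSpan ℝ S ⟨he, hfe.posSemidef⟩)
      (subset_affineSpan ℝ S h0)
    convert hmem using 1
    simp [smul_smul, ht.ne']
  rw [intrinsicInterior_eq_of_affineSpan_eq hspan]
  ext x
  constructor
  · rintro ⟨hx, hxS⟩
    replace hxS : ∀ᶠ y in 𝓝[V] x, y ∈ S := hxS
    refine ⟨hx, ?_⟩
    obtain ⟨t, ht, hxt⟩ := hxS.exists_pos_add_smul hx (V.neg_mem he)
    have hsplit : f x = f (x + t • -e) + t • f e := by simp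
    exact hsplit ▸ PosDef.posSemidef_add hxt.2 (hfe.smul ht)
  · exact fun hx => ⟨hx.1, (hT x hx.1 hx.2).mono fun y hy => ⟨hy.1, hy.2.posSemidef⟩⟩

end

theorem relint_tangentCone_psd_general {n : ℕ} (P : Matrix (Fin n) (Fin n) ℝ) (lam : Fin n → ℝ)
    (hP : P * Pᵀ = 1) :
    intrinsicInterior ℝ
        {H : Matrix (Fin n) (Fin n) ℝ | H.IsSymm ∧
          Matrix.PosSemidef (Matrix.of fun i j : {i : Fin n // lam i = 0} =>
            (Pᵀ * H * P) i.1 j.1)} =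
      {Γ : Matrix (Fin n) (Fin n) ℝ | Γ.IsSymm ∧
        Matrix.PosDef (Matrix.of fun i j : {i : Fin n // lam i = 0} =>
          (Pᵀ * Γ * P) i.1 j.1)} := by
  set Q : Matrix (Fin n) {i // lam i = 0} ℝ := P.submatrix id Subtype.val
  let f : Matrix (Fin n) (Fin n) ℝ →L[ℝ] Matrix {i // lam i = 0} {i // lam i = 0} ℝ :=
    ((mulRightLinearMap _ ℝ Q).comp (mulLeftLinearMap _ ℝ Qᴴ)).toContinuousLinearMap
  have hf1 : f 1 = 1 := by
    ext i j
    have hPP : Pᵀ * P = 1 := mul_eq_one_comm.mp hP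
    simpa [f, Q, Matrix.mul_apply, Matrix.one_apply, Subtype.ext_iff] using
      congr_fun₂ hPP i.1 j.1
  exact intrinsicInterior_setOf_posSemidef (selfAdjoint.submodule ℝ _) f
    (fun H hH => isHermitian_conjTranspose_mul_mul Q hH) (IsSelfAdjoint.one _) (hf1 ▸ PosDef.one)

/-- Let `X` be a nonzero singular PSD matrix with orthogonal eigendecomposition
`X = P Diag(λ) Pᵀ`, and let `β = {i : λ_i = 0}`. The tangent cone to `S^n_+` at `X` is
`T = {H ∈ S^n | P_βᵀ H P_β ⪰ 0}`, and its relative interior is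
`{Γ ∈ S^n | P_βᵀ Γ P_β ≻ 0}`. -/
theorem relint_tangentCone_psd {n : ℕ} (X P : Matrix (Fin n) (Fin n) ℝ) (lam : Fin n → ℝ)
    (hX : X.PosSemidef) (hXne : X ≠ 0) (hsing : ¬ X.PosDef)
    (hP : P * Pᵀ = 1)
    (hdecomp : X = P * Matrix.diagonal lam * Pᵀ) :
    intrinsicInterior ℝ
        {H : Matrix (Fin n) (Fin n) ℝ | H.IsSymm ∧
          Matrix.PosSemidef (Matrix.of fun i j : {i : Fin n // lam i = 0} =>
            (Pᵀ * H * P) i.1 j.1)} =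
      {Γ : Matrix (Fin n) (Fin n) ℝ | Γ.IsSymm ∧
        Matrix.PosDef (Matrix.of fun i j : {i : Fin n // lam i = 0} =>
          (Pᵀ * Γ * P) i.1 j.1)} :=
  relint_tangentCone_psd_general P lam hP
end
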